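/- Let 1 ≤ k < n be integers and ζ ∈ ℂ with |ζ| = 1. Set F(z) = z^k(1 − z)^{n−k}, G(z) = (1 − ζz^k)/(1 − ζz^n), and μ(z) = (z + i)/(z − i). Pick ρ ∈ ℂ with ρ² = ζ^{−(n−k)}, and set f(z) = ρ·F(z) and g(z) = G(μ(z)). Then f ∘ g ∈ ℝ(z), i.e. the composition f(g(z)) has real coefficients. -/

import Mathlib

/-!
Coefficientwise complex conjugation `σ` on `ℂ(z)` fixes `z` and sends `i` to `-i`, so
`σ μ = μ⁻¹`. For `|ζ| = 1` this gives `σ g = μ^(n-k) g` and `σ (1 - g) = ζ⁻¹ μ^(-k) (1 - g)`,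
hence `σ (F ∘ g) = ζ^(-(n-k)) (F ∘ g)`. Since `|ρ| = 1`, `conj ρ = ρ⁻¹ = ρ ζ^(n-k)`, so
`f ∘ g = ρ (F ∘ g)` is fixed by `σ`. A rational function fixed by `σ` has real coefficients
because its numerator and monic denominator are uniquely determined by it.
-/

noncomputable section

/-- A rational function over `ℂ` has real coefficients (i.e. lies in `ℝ(z)`). -/
def RatFunc.IsReal (f : RatFunc ℂ) : Prop :=
  (∀ n, (f.num.coeff n).im = 0) ∧ (∀ n, (f.denom.coeff n).im = 0)

/-- The Möbius function `μ(z) = (z + i)/(z - i)` as a rational function. -/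
def μ : RatFunc ℂ := (RatFunc.X + RatFunc.C Complex.I) / (RatFunc.X - RatFunc.C Complex.I)

/-- `G(μ(z))` where `G(z) = (1 - ζ z^k)/(1 - ζ z^n)`. -/
def Gμ (n k : ℕ) (ζ : ℂ) : RatFunc ℂ :=
  (1 - RatFunc.C ζ * μ ^ k) / (1 - RatFunc.C ζ * μ ^ n)

open Polynomial

namespace RatFunc

variable {K : Type*} [Field K]

def mapCoeffs (φ : K →+* K) : RatFunc K →+* RatFunc K :=
  mapRingHom (Polynomial.mapRingHom φ) fun _ hp ↦ by
    simpa [mem_nonZeroDivisors_iff_ne_zero, Polynomial.map_eq_zero] using hp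

theorem mapCoeffs_algebraMap (φ : K →+* K) (p : K[X]) :
    mapCoeffs φ (algebraMap K[X] _ p) = algebraMap K[X] _ (p.map φ) := by
  simp [mapCoeffs, coe_mapRingHom_eq_coe_map, map_apply]

theorem mapCoeffs_C (φ : K →+* K) (a : K) : mapCoeffs φ (C a) = C (φ a) := by
  rw [← algebraMap_C, mapCoeffs_algebraMap, Polynomial.map_C, algebraMap_C]

theorem mapCoeffs_X (φ : K →+* K) : mapCoeffs φ X = X := by
  rw [← algebraMap_X, mapCoeffs_algebraMap, Polynomial.map_X, algebraMap_X]

theorem mapCoeffs_apply (φ : K →+* K) (f : RatFunc K) :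
    mapCoeffs φ f = algebraMap K[X] _ (f.num.map φ) / algebraMap K[X] _ (f.denom.map φ) := by
  conv_lhs => rw [← num_div_denom f]
  rw [map_div₀, mapCoeffs_algebraMap, mapCoeffs_algebraMap]

theorem denom_map_eq_of_mapCoeffs_eq {φ : K →+* K} {f : RatFunc K} (hf : mapCoeffs φ f = f) :
    f.denom.map φ = f.denom := by
  have hdvd : f.denom ∣ f.denom.map φ :=
    (denom_dvd (Polynomial.map_ne_zero f.denom_ne_zero)).2
      ⟨_, (mapCoeffs_apply φ f).symm.trans hf |>.symm⟩
  exact eq_of_monic_of_dvd_of_natDegree_le f.monic_denom (f.monic_denom.map φ) hdvd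
    (natDegree_map φ).le

theorem num_map_eq_of_mapCoeffs_eq {φ : K →+* K} {f : RatFunc K} (hf : mapCoeffs φ f = f) :
    f.num.map φ = f.num := by
  have h := (num_mul_eq_mul_denom_iff (p := f.num.map φ) f.denom_ne_zero).2 <| by
    rw [← denom_map_eq_of_mapCoeffs_eq hf, ← mapCoeffs_apply, hf]
  exact (mul_right_cancel₀ f.denom_ne_zero h).symm

theorem isReal_of_mapCoeffs_conj_eq {f : RatFunc ℂ} (hf : mapCoeffs (starRingEnd ℂ) f = f) :
    f.IsReal := by
  refine ⟨fun n ↦ ?_, fun n ↦ ?_⟩ <;> rw [← Complex.conj_eq_iff_im, ← coeff_map]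
  · rw [num_map_eq_of_mapCoeffs_eq hf]
  · rw [denom_map_eq_of_mapCoeffs_eq hf]

end RatFunc

theorem Complex.conj_eq_mul_of_sq_eq_inv {w ρ : ℂ} (hw : ‖w‖ = 1) (hρ : ρ ^ 2 = w⁻¹) :
    starRingEnd ℂ ρ = ρ * w := by
  have hρ1 : ‖ρ‖ = 1 := by
    rw [← pow_eq_one_iff_of_nonneg (norm_nonneg ρ) two_ne_zero, ← norm_pow, hρ, norm_inv, hw,
      inv_one]
  have hρ0 : ρ ≠ 0 := norm_ne_zero_iff.1 (hρ1 ▸ one_ne_zero)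
  rw [← Complex.inv_eq_conj hρ1, ← inv_inv w, ← hρ]
  field_simp

local notation "σ" => RatFunc.mapCoeffs (starRingEnd ℂ)

theorem μ_eq_div : μ = algebraMap ℂ[X] (RatFunc ℂ) (X + C Complex.I) /
    algebraMap ℂ[X] (RatFunc ℂ) (X - C Complex.I) := by
  simp [μ, RatFunc.algebraMap_X, RatFunc.algebraMap_C]

theorem μ_ne_zero : μ ≠ 0 := by
  rw [μ_eq_div]
  exact div_ne_zero (RatFunc.algebraMap_ne_zero (X_add_C_ne_zero _))
    (RatFunc.algebraMap_ne_zero (X_sub_C_ne_zero _))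

theorem mapCoeffs_conj_μ : σ μ = μ⁻¹ := by
  rw [μ, map_div₀, map_add, map_sub, RatFunc.mapCoeffs_X, RatFunc.mapCoeffs_C, Complex.conj_I,
    map_neg, inv_div, sub_neg_eq_add, sub_eq_add_neg]

theorem one_sub_C_mul_μ_pow_ne_zero {ζ : ℂ} (hζ : ζ ≠ 0) {j : ℕ} (hj : j ≠ 0) :
    1 - RatFunc.C ζ * μ ^ j ≠ 0 := by
  intro h
  have hpoly : C ζ * (X + C Complex.I) ^ j = (X - C Complex.I) ^ j := by
    refine IsFractionRing.injective ℂ[X] (RatFunc ℂ) ?_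
    rw [sub_eq_zero, eq_comm, μ_eq_div, div_pow, mul_div_assoc', div_eq_one_iff_eq
      (pow_ne_zero _ (RatFunc.algebraMap_ne_zero (X_sub_C_ne_zero _)))] at h
    simpa [RatFunc.algebraMap_C] using h
  have := congrArg (eval Complex.I) hpoly
  simp [hζ, hj, Complex.I_ne_zero] at this

theorem mapCoeffs_conj_one_sub_C_mul_μ_pow {ζ : ℂ} (hζ : ‖ζ‖ = 1) (j : ℕ) :
    σ (1 - RatFunc.C ζ * μ ^ j) = 1 - RatFunc.C ζ⁻¹ * (μ ^ j)⁻¹ := by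
  rw [map_sub, map_one, map_mul, map_pow, RatFunc.mapCoeffs_C, mapCoeffs_conj_μ, inv_pow,
    ← Complex.inv_eq_conj hζ]

theorem mapCoeffs_conj_Gμ {ζ : ℂ} (hζ : ‖ζ‖ = 1) {k m : ℕ} (hkm : k + m ≠ 0) :
    σ (Gμ (k + m) k ζ) = μ ^ m * Gμ (k + m) k ζ := by
  have hζ0 : ζ ≠ 0 := norm_ne_zero_iff.1 (hζ ▸ one_ne_zero)
  have hD := one_sub_C_mul_μ_pow_ne_zero hζ0 hkm
  have hσD : 1 - RatFunc.C ζ⁻¹ * (μ ^ (k + m))⁻¹ ≠ 0 := by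
    rw [← mapCoeffs_conj_one_sub_C_mul_μ_pow hζ]
    exact (_root_.map_ne_zero _).2 hD
  rw [Gμ, map_div₀, mapCoeffs_conj_one_sub_C_mul_μ_pow hζ,
    mapCoeffs_conj_one_sub_C_mul_μ_pow hζ, div_eq_iff hσD, mul_div_assoc', div_mul_eq_mul_div,
    eq_div_iff hD, map_inv₀]
  field_simp [μ_ne_zero, hζ0]
  ring

theorem mapCoeffs_conj_one_sub_Gμ {ζ : ℂ} (hζ : ‖ζ‖ = 1) {k m : ℕ} (hkm : k + m ≠ 0) :
    σ (1 - Gμ (k + m) k ζ) = RatFunc.C ζ⁻¹ * (μ ^ k)⁻¹ * (1 - Gμ (k + m) k ζ) := by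
  have hζ0 : ζ ≠ 0 := norm_ne_zero_iff.1 (hζ ▸ one_ne_zero)
  have hD := one_sub_C_mul_μ_pow_ne_zero hζ0 hkm
  rw [map_sub, map_one, mapCoeffs_conj_Gμ hζ hkm, Gμ, map_inv₀]
  field_simp [μ_ne_zero, hζ0]
  ring

theorem mapCoeffs_conj_Gμ_pow_mul_one_sub_pow {ζ : ℂ} (hζ : ‖ζ‖ = 1) {k m : ℕ}
    (hkm : k + m ≠ 0) :
    σ (Gμ (k + m) k ζ ^ k * (1 - Gμ (k + m) k ζ) ^ m) =
      RatFunc.C ζ⁻¹ ^ m * (Gμ (k + m) k ζ ^ k * (1 - Gμ (k + m) k ζ) ^ m) := by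
  have hμ : (μ ^ m) ^ k * ((μ ^ k)⁻¹) ^ m = 1 := by
    rw [← pow_mul, inv_pow, ← pow_mul, Nat.mul_comm m k,
      mul_inv_cancel₀ (pow_ne_zero _ μ_ne_zero)]
  rw [map_mul, map_pow, map_pow, mapCoeffs_conj_Gμ hζ hkm, mapCoeffs_conj_one_sub_Gμ hζ hkm,
    mul_pow, mul_pow, mul_pow]
  linear_combination
    (RatFunc.C ζ⁻¹ ^ m * Gμ (k + m) k ζ ^ k * (1 - Gμ (k + m) k ζ) ^ m) * hμ

theorem fg_real_general (n k : ℕ) (hkn : k < n) (ζ : ℂ) (hζ : ‖ζ‖ = 1)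
    (ρ : ℂ) (hρ : ρ ^ 2 = (ζ ^ (n - k))⁻¹) :
    (RatFunc.C ρ * ((Gμ n k ζ) ^ k * (1 - Gμ n k ζ) ^ (n - k))).IsReal := by
  obtain ⟨m, rfl⟩ := Nat.exists_eq_add_of_le hkn.le
  rw [Nat.add_sub_cancel_left] at hρ ⊢
  have hζ0 : ζ ≠ 0 := norm_ne_zero_iff.1 (hζ ▸ one_ne_zero)
  have hζm : ‖ζ ^ m‖ = 1 := by rw [norm_pow, hζ, one_pow]
  have hC : RatFunc.C (ρ * ζ ^ m) * RatFunc.C ζ⁻¹ ^ m = RatFunc.C ρ := by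
    rw [← map_pow, ← map_mul, mul_assoc, ← mul_pow, mul_inv_cancel₀ hζ0, one_pow, mul_one]
  apply RatFunc.isReal_of_mapCoeffs_conj_eq
  rw [map_mul, RatFunc.mapCoeffs_C, Complex.conj_eq_mul_of_sq_eq_inv hζm hρ,
    mapCoeffs_conj_Gμ_pow_mul_one_sub_pow hζ (by omega), ← mul_assoc, hC]

/-- **Example.** For `1 ≤ k < n`, `|ζ| = 1`, `F(z) = z^k (1-z)^{n-k}`,
`G(z) = (1 - ζ z^k)/(1 - ζ z^n)`, `μ(z) = (z+i)/(z-i)`, `ρ² = ζ^{-(n-k)}`,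
`f = ρ F` and `g = G ∘ μ`, the composition `f ∘ g` lies in `ℝ(z)`. -/
theorem fg_real (n k : ℕ) (hk : 1 ≤ k) (hkn : k < n) (ζ : ℂ) (hζ : ‖ζ‖ = 1)
    (ρ : ℂ) (hρ : ρ ^ 2 = (ζ ^ (n - k))⁻¹) :
    (RatFunc.C ρ * ((Gμ n k ζ) ^ k * (1 - Gμ n k ζ) ^ (n - k))).IsReal :=
  fg_real_general n k hkn ζ hζ ρ hρ

end
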